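/- Let m_3 be a positive integer. Then c_3^{3,m_3} > 0, c_4^{3,m_3} > 0, and c_5^{3,m_3} > 0. -/
import Mathlib


/-- `P k = (k+1/2)(k-1/2)⋯(3/2)(1/2) = (2k+1)!!/2^(k+1)`. -/
noncomputable def P (k : ℕ) : ℝ := ∏ i ∈ Finset.range (k + 1), ((i : ℝ) + 1 / 2)

/-- The combinatorial coefficient `c_p^{m₂,m₃}` from the paper. -/
noncomputable def c (m2 m3 p : ℕ) : ℝ :=
  (∑ i ∈ Finset.Icc (p - m2) (min m2 p),
      ((2 : ℝ) ^ (2 * i) * P (m3 + i)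
            / ((Nat.factorial (2 * i)) * (Nat.factorial (m2 - i)))
        - P (m3 - 1) / (2 * (Nat.factorial i) * (Nat.factorial (m2 - i)))) *
      ((2 : ℝ) ^ (2 * (p : ℤ) - 2 * (i : ℤ) - 1)
            * (2 * (m2 : ℝ) + 2 * (i : ℝ) - 2 * (p : ℝ) + 1) * P (m3 + p - i - 1)
            / ((Nat.factorial (2 * p - 2 * i)) * (Nat.factorial (m2 + i - p)))
        - P (m3 - 1) / (2 * (Nat.factorial (p - i)) * (Nat.factorial (m2 + i - p)))))
  - ∑ i ∈ Finset.Ico (p - m2) (min m2 p),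
      (2 : ℝ) ^ (2 * p) * P (m3 + i) * P (m3 + p - i - 1)
        / ((Nat.factorial (2 * i + 1)) * (Nat.factorial (2 * p - 2 * i - 1))
            * (Nat.factorial (m2 - i - 1)) * (Nat.factorial (m2 + i - p)))

lemma Pstep (k : ℕ) : P (k + 1) = P k * ((k : ℝ) + 3 / 2) := by
  unfold P
  rw [Finset.prod_range_succ]
  push_cast
  ring

lemma Ppos (k : ℕ) : 0 < P k := by
  unfold P
  apply Finset.prod_pos
  intro i _
  positivity

lemma c33 (n : ℕ) : c 3 (n+1) 3 = P n ^ 2 *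
    (55/6 + 553/27*(n:ℝ) + 827/54*(n:ℝ)^2 + 119/27*(n:ℝ)^3 + 11/27*(n:ℝ)^4) := by
  have h1 : P (n+1) = P n * ((n:ℝ) + 3/2) := Pstep n
  have h2 : P (n+2) = P (n+1) * (((n+1:ℕ):ℝ) + 3/2) := Pstep (n+1)
  have h3 : P (n+3) = P (n+2) * (((n+2:ℕ):ℝ) + 3/2) := Pstep (n+2)
  have h4 : P (n+4) = P (n+3) * (((n+3:ℕ):ℝ) + 3/2) := Pstep (n+3)
  unfold c
  rw [show Finset.Icc (3-3) (min 3 3) = ({0,1,2,3} : Finset ℕ) by decide,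
      show Finset.Ico (3-3) (min 3 3) = ({0,1,2} : Finset ℕ) by decide]
  norm_num [Finset.sum_insert, Finset.mem_insert, Nat.factorial]
  simp only [show n+1+1 = n+2 from rfl, show n+1+2 = n+3 from rfl,
    show n+1+3 = n+4 from rfl, show n+1+3-2-1 = n+1 from by omega]
  rw [h4, h3, h2, h1]
  push_cast
  ring

lemma c34 (n : ℕ) : c 3 (n+1) 4 = P n ^ 2 *
    (175/12 + 1345/36*(n:ℝ) + 1576/45*(n:ℝ)^2 + 15*(n:ℝ)^3 + 134/45*(n:ℝ)^4 + 2/9*(n:ℝ)^5) := by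
  have h1 : P (n+1) = P n * ((n:ℝ) + 3/2) := Pstep n
  have h2 : P (n+2) = P (n+1) * (((n+1:ℕ):ℝ) + 3/2) := Pstep (n+1)
  have h3 : P (n+3) = P (n+2) * (((n+2:ℕ):ℝ) + 3/2) := Pstep (n+2)
  have h4 : P (n+4) = P (n+3) * (((n+3:ℕ):ℝ) + 3/2) := Pstep (n+3)
  unfold c
  rw [show Finset.Icc (4-3) (min 3 4) = ({1,2,3} : Finset ℕ) by decide,
      show Finset.Ico (4-3) (min 3 4) = ({1,2} : Finset ℕ) by decide]
  norm_num [Finset.sum_insert, Finset.mem_insert, Nat.factorial]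
  simp only [show n+1+1 = n+2 from rfl, show n+1+2 = n+3 from rfl,
    show n+1+3 = n+4 from rfl, show n+1+4-2-1 = n+2 from by omega,
    show n+1+4-3-1 = n+1 from by omega]
  rw [h4, h3, h2, h1]
  push_cast
  ring

lemma c35 (n : ℕ) : c 3 (n+1) 5 = P n ^ 2 *
    (121/12 + 1309/45*(n:ℝ) + 87803/2700*(n:ℝ)^2 + 163/9*(n:ℝ)^3 + 3611/675*(n:ℝ)^4 + 4/5*(n:ℝ)^5 + 32/675*(n:ℝ)^6) := by
  have h1 : P (n+1) = P n * ((n:ℝ) + 3/2) := Pstep n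
  have h2 : P (n+2) = P (n+1) * (((n+1:ℕ):ℝ) + 3/2) := Pstep (n+1)
  have h3 : P (n+3) = P (n+2) * (((n+2:ℕ):ℝ) + 3/2) := Pstep (n+2)
  have h4 : P (n+4) = P (n+3) * (((n+3:ℕ):ℝ) + 3/2) := Pstep (n+3)
  unfold c
  rw [show Finset.Icc (5-3) (min 3 5) = ({2,3} : Finset ℕ) by decide,
      show Finset.Ico (5-3) (min 3 5) = ({2} : Finset ℕ) by decide]
  norm_num [Finset.sum_insert, Finset.mem_insert, Nat.factorial]
  simp only [show n+1+2 = n+3 from rfl, show n+1+3 = n+4 from rfl,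
    show n+1+5-2-1 = n+3 from by omega, show n+1+5-3-1 = n+2 from by omega]
  rw [h4, h3, h2, h1]
  push_cast
  ring

theorem stmt_11 (m3 : ℕ) (hm3 : 1 ≤ m3) :
    0 < c 3 m3 3 ∧ 0 < c 3 m3 4 ∧ 0 < c 3 m3 5 := by
  obtain ⟨n, rfl⟩ : ∃ n, m3 = n + 1 := ⟨m3 - 1, by omega⟩
  have hP : 0 < P n := Ppos n
  have hn : (0:ℝ) ≤ (n:ℝ) := Nat.cast_nonneg n
  refine ⟨?_, ?_, ?_⟩
  · rw [c33]; apply mul_pos (pow_pos hP 2); positivity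
  · rw [c34]; apply mul_pos (pow_pos hP 2); positivity
  · rw [c35]; apply mul_pos (pow_pos hP 2); positivity
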